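/- Let m = p₁ ⋯ p_s be a squarefree integer with s ≥ 1 distinct prime factors. Then the clique number and chromatic number of the intersection graph of ideals of ℤ_m satisfy ω(G(ℤ_m)) = χ(G(ℤ_m)) = 2^{s−1} − 1. -/

import Mathlib

/-!
The ideals of `ℤ/m` are the `(d)` with `d ∣ m`, and `(d) ⊓ (e) = (lcm d e)`. Fix a prime `p ∣ m`
and the nonzero ideal `J = (m/p)`. Any two proper ideals containing `J` meet in at least `J`, so
they form a clique, of size `τ(m/p) - 1 = 2^(s-1) - 1`. For squarefree `m` the ideal `(m/d)` is a
complement of `(d)`, and if `(d)` does not contain `J` then `p ∣ d`, so `(m/d)` does. Colouring a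
vertex by itself when it contains `J` and by its complement otherwise is therefore a proper
colouring with the clique as palette: a vertex never meets its complement, and `d ↦ m/d` is
injective.
-/

open Finset Ideal

def idealGraph (R : Type*) [CommRing R] :
    SimpleGraph {I : Ideal R // I ≠ ⊥ ∧ I ≠ ⊤} where
  Adj I J := I ≠ J ∧ I.1 ⊓ J.1 ≠ ⊥
  symm := ⟨fun I J h => ⟨h.1.symm, by rw [inf_comm]; exact h.2⟩⟩
  loopless := ⟨fun I h => h.1 rfl⟩

namespace SimpleGraph

variable {V : Type*} {G : SimpleGraph V} {s : Set V}

lemma Coloring.colorable_natCard [Finite s] (C : G.Coloring s) : G.Colorable (Nat.card s) := by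
  have := Fintype.ofFinite s
  simpa only [Nat.card_eq_fintype_card] using C.colorable

lemma IsClique.isNClique_toFinset [Fintype s] (hs : G.IsClique s) :
    G.IsNClique (Nat.card s) s.toFinset :=
  ⟨by simpa using hs, by rw [Set.toFinset_card, Nat.card_eq_fintype_card]⟩

lemma IsClique.cliqueNum_eq_of_coloring [Finite V] (hs : G.IsClique s) (C : G.Coloring s) :
    G.cliqueNum = Nat.card s := by
  have := Fintype.ofFinite s
  obtain ⟨t, ht⟩ := G.exists_isNClique_cliqueNum
  refine le_antisymm ?_ ?_
  · exact ht.card_eq ▸ ht.isClique.card_le_of_colorable C.colorable_natCard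
  · exact hs.isNClique_toFinset.card_eq ▸ hs.isNClique_toFinset.isClique.card_le_cliqueNum

lemma IsClique.chromaticNumber_eq_of_coloring [Finite s] (hs : G.IsClique s) (C : G.Coloring s) :
    G.chromaticNumber = Nat.card s := by
  have := Fintype.ofFinite s
  refine le_antisymm C.colorable_natCard.chromaticNumber_le ?_
  exact hs.isNClique_toFinset.card_eq ▸ hs.isNClique_toFinset.isClique.card_le_chromaticNumber

end SimpleGraph

namespace idealGraph

variable {R : Type*} [CommRing R] {J : Ideal R} {f : Ideal R → Ideal R}

def verticesAbove (J : Ideal R) : Set {I : Ideal R // I ≠ ⊥ ∧ I ≠ ⊤} := {I | J ≤ I.1}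

lemma isClique_verticesAbove (hJ : J ≠ ⊥) : (idealGraph R).IsClique (verticesAbove J) :=
  fun _ hI _ hK hne => ⟨hne, fun h => hJ (eq_bot_iff.mpr (h ▸ le_inf hI hK))⟩

open scoped Classical in
noncomputable def coloringOfInvolutive (hJ : J ≠ ⊥) (hf : Function.Involutive f)
    (hinf : ∀ I, I ⊓ f I = ⊥) (hle : ∀ I, ¬ J ≤ I → J ≤ f I) :
    (idealGraph R).Coloring (verticesAbove J) :=
  SimpleGraph.Coloring.mk
    (fun I => if h : J ≤ I.1 then ⟨I, h⟩ else
      ⟨⟨f I.1, fun hbot => hJ (le_bot_iff.mp (hbot ▸ hle _ h)),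
        fun htop => I.2.1 (by simpa [htop] using hinf I.1)⟩, hle _ h⟩)
    fun {I K} hadj heq => by
      have hval := congrArg (fun c => c.1.1) heq
      split_ifs at hval with hI hK hK
      · exact hadj.1 (Subtype.ext hval)
      · exact hadj.2 (by rw [hval, inf_comm, hinf])
      · exact hadj.2 (by rw [← hval, hinf])
      · exact hadj.1 (Subtype.ext (hf.injective hval))

theorem cliqueNum_eq_and_chromaticNumber_eq [Finite (Ideal R)] (hJ : J ≠ ⊥)
    (hf : Function.Involutive f) (hinf : ∀ I, I ⊓ f I = ⊥) (hle : ∀ I, ¬ J ≤ I → J ≤ f I) :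
    (idealGraph R).cliqueNum = Nat.card (verticesAbove J) ∧
      (idealGraph R).chromaticNumber = Nat.card (verticesAbove J) :=
  let C := coloringOfInvolutive hJ hf hinf hle
  ⟨(isClique_verticesAbove hJ).cliqueNum_eq_of_coloring C,
    (isClique_verticesAbove hJ).chromaticNumber_eq_of_coloring C⟩

end idealGraph

namespace Nat

variable {m p d : ℕ}

lemma lcm_div_self_of_squarefree (hm : Squarefree m) (hd : d ∣ m) : d.lcm (m / d) = m := by
  have hmul : d * (m / d) = m := Nat.mul_div_cancel' hd
  rw [(coprime_of_squarefree_mul (by rwa [hmul])).lcm_eq_mul, hmul]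

lemma Prime.dvd_div_of_not_dvd (hp : p.Prime) (hpm : p ∣ m) (hd : d ∣ m) (hpd : ¬ p ∣ d) :
    d ∣ m / p :=
  (hp.coprime_iff_not_dvd.mpr hpd).symm.dvd_of_dvd_mul_left (by rwa [Nat.mul_div_cancel' hpm])

lemma dvd_div_or_div_dvd_div_of_squarefree (hm : Squarefree m) (hp : p.Prime) (hpm : p ∣ m)
    (hd : d ∣ m) : d ∣ m / p ∨ m / d ∣ m / p := by
  by_cases hpd : p ∣ d
  · refine .inr (hp.dvd_div_of_not_dvd hpm (div_dvd_of_dvd hd) fun hpd' => hp.one_lt.ne' ?_)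
    exact Nat.isUnit_iff.mp (hm p (Nat.mul_div_cancel' hd ▸ mul_dvd_mul hpd hpd'))
  · exact .inl (hp.dvd_div_of_not_dvd hpm hd hpd)

lemma card_divisors_of_squarefree (hm : Squarefree m) : #m.divisors = 2 ^ #m.primeFactors := by
  rw [card_divisors hm.ne_zero, ← prod_const]
  refine prod_congr rfl fun p hp => ?_
  rw [factorization_eq_one_of_squarefree hm (prime_of_mem_primeFactors hp)
    (dvd_of_mem_primeFactors hp)]

lemma card_divisors_div_prime_of_squarefree (hm : Squarefree m) (hp : p.Prime) (hpm : p ∣ m) :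
    #(m / p).divisors = 2 ^ (#m.primeFactors - 1) := by
  have hmul : p * (m / p) = m := Nat.mul_div_cancel' hpm
  have hcard := (coprime_of_squarefree_mul (by rwa [hmul])).card_divisors_mul
  have hs : 0 < #m.primeFactors :=
    Finset.card_pos.mpr ⟨p, mem_primeFactors.mpr ⟨hp, hpm, hm.ne_zero⟩⟩
  rw [hmul, card_divisors_of_squarefree hm, hp.divisors, card_pair hp.one_lt.ne,
    ← Nat.succ_pred_eq_of_pos hs, pow_succ'] at hcard
  exact (Nat.eq_of_mul_eq_mul_left two_pos hcard).symm

end Nat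

namespace ZMod

variable {m d e k p : ℕ}

lemma comap_span_natCast (hd : d ∣ m) :
    (span {(d : ZMod m)}).comap (Int.castRingHom (ZMod m)) = span {(d : ℤ)} := by
  have hmap : span {(d : ZMod m)} = (span {(d : ℤ)}).map (Int.castRingHom (ZMod m)) := by
    simp [map_span]
  rw [hmap, comap_map_of_surjective _ intCast_surjective, ← RingHom.ker_eq_comap_bot,
    ker_intCastRingHom, sup_eq_left, span_singleton_le_span_singleton]
  exact Int.natCast_dvd_natCast.mpr hd

lemma intCast_mem_span_natCast_iff (hd : d ∣ m) {z : ℤ} :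
    (z : ZMod m) ∈ span {(d : ZMod m)} ↔ (d : ℤ) ∣ z := by
  rw [← mem_span_singleton, ← comap_span_natCast hd, mem_comap, eq_intCast]

lemma span_natCast_le_span_natCast_iff (he : e ∣ m) :
    span {(d : ZMod m)} ≤ span {(e : ZMod m)} ↔ e ∣ d := by
  refine ⟨fun h => ?_, fun h => span_singleton_le_span_singleton.mpr (Nat.cast_dvd_cast h)⟩
  have hd : ((d : ℤ) : ZMod m) ∈ span {(e : ZMod m)} := by
    simpa using h (mem_span_singleton_self _)
  exact Int.natCast_dvd_natCast.mp ((intCast_mem_span_natCast_iff he).mp hd)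

lemma span_natCast_inj (hd : d ∣ m) (he : e ∣ m) :
    span {(d : ZMod m)} = span {(e : ZMod m)} ↔ d = e :=
  ⟨fun h => Nat.dvd_antisymm ((span_natCast_le_span_natCast_iff hd).mp h.ge)
    ((span_natCast_le_span_natCast_iff he).mp h.le), fun h => h ▸ rfl⟩

lemma span_natCast_eq_bot_iff (hd : d ∣ m) : span {(d : ZMod m)} = ⊥ ↔ d = m := by
  rw [← span_natCast_inj hd dvd_rfl, natCast_self, span_singleton_zero]

lemma span_natCast_eq_top_iff (hd : d ∣ m) : span {(d : ZMod m)} = ⊤ ↔ d = 1 := by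
  rw [← span_natCast_inj hd (one_dvd m), Nat.cast_one, span_singleton_one]

lemma span_natCast_inf_span_natCast (hd : d ∣ m) (he : e ∣ m) :
    span {(d : ZMod m)} ⊓ span {(e : ZMod m)} = span {((d.lcm e : ℕ) : ZMod m)} := by
  ext x
  obtain ⟨z, rfl⟩ := intCast_surjective x
  rw [Submodule.mem_inf, intCast_mem_span_natCast_iff hd, intCast_mem_span_natCast_iff he,
    intCast_mem_span_natCast_iff (Nat.lcm_dvd hd he), ← Int.lcm_natCast_natCast,
    Int.coe_lcm_dvd_iff]

lemma exists_dvd_span_natCast_eq (I : Ideal (ZMod m)) : ∃ d, d ∣ m ∧ span {(d : ZMod m)} = I := by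
  obtain ⟨g, hg⟩ := (IsPrincipalIdealRing.principal (I.comap (Int.castRingHom (ZMod m)))).principal
  rw [submodule_span_eq, ← Int.span_natAbs] at hg
  refine ⟨g.natAbs, ?_, ?_⟩
  · have hm : (m : ℤ) ∈ I.comap (Int.castRingHom (ZMod m)) := by simp
    rw [hg, mem_span_singleton] at hm
    exact Int.natCast_dvd_natCast.mp hm
  · rw [← map_comap_of_surjective (Int.castRingHom (ZMod m)) intCast_surjective I, hg, map_span]
    simp

lemma exists_involutive_span_natCast_div (hm : m ≠ 0) :
    ∃ f : Ideal (ZMod m) → Ideal (ZMod m), Function.Involutive f ∧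
      ∀ d, d ∣ m → f (span {(d : ZMod m)}) = span {((m / d : ℕ) : ZMod m)} := by
  choose g hg hgI using exists_dvd_span_natCast_eq (m := m)
  have hgspan : ∀ d, d ∣ m → g (span {(d : ZMod m)}) = d :=
    fun d hd => (span_natCast_inj (hg _) hd).mp (hgI _)
  refine ⟨fun I => span {((m / g I : ℕ) : ZMod m)}, fun I => ?_,
    fun d hd => by simp only [hgspan d hd]⟩
  obtain ⟨d, hd, rfl⟩ := exists_dvd_span_natCast_eq I
  simp only [hgspan d hd, hgspan _ (Nat.div_dvd_of_dvd hd), Nat.div_div_self hd hm]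

lemma exists_compl_span_div_prime (hm : Squarefree m) (hp : p.Prime) (hpm : p ∣ m) :
    ∃ f : Ideal (ZMod m) → Ideal (ZMod m), Function.Involutive f ∧ (∀ I, I ⊓ f I = ⊥) ∧
      ∀ I, ¬ span {((m / p : ℕ) : ZMod m)} ≤ I → span {((m / p : ℕ) : ZMod m)} ≤ f I := by
  obtain ⟨f, hf, hfspan⟩ := exists_involutive_span_natCast_div hm.ne_zero
  refine ⟨f, hf, fun I => ?_, fun I hI => ?_⟩
  · obtain ⟨d, hd, rfl⟩ := exists_dvd_span_natCast_eq I
    rw [hfspan d hd, span_natCast_inf_span_natCast hd (Nat.div_dvd_of_dvd hd),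
      Nat.lcm_div_self_of_squarefree hm hd, natCast_self, span_singleton_zero]
  · obtain ⟨d, hd, rfl⟩ := exists_dvd_span_natCast_eq I
    rw [span_natCast_le_span_natCast_iff hd] at hI
    rw [hfspan d hd, span_natCast_le_span_natCast_iff (Nat.div_dvd_of_dvd hd)]
    exact (Nat.dvd_div_or_div_dvd_div_of_squarefree hm hp hpm hd).resolve_left hI

lemma natCard_verticesAbove_span_natCast (hm : m ≠ 0) (hk : k ∣ m) (hkm : k ≠ m) :
    Nat.card (idealGraph.verticesAbove (span {(k : ZMod m)})) = #k.divisors - 1 := by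
  have hk0 : k ≠ 0 := ne_zero_of_dvd_ne_zero hm hk
  have hklt : k < m := (Nat.le_of_dvd (Nat.pos_of_ne_zero hm) hk).lt_of_ne hkm
  have hdiv : ∀ d ∈ k.divisors.erase 1, d ∣ k ∧ d ∣ m ∧ d ≠ 1 ∧ d ≠ m := by
    intro d hd
    rw [mem_erase, Nat.mem_divisors] at hd
    exact ⟨hd.2.1, hd.2.1.trans hk, hd.1,
      ((Nat.le_of_dvd (Nat.pos_of_ne_zero hk0) hd.2.1).trans_lt hklt).ne⟩
  let φ : k.divisors.erase 1 → idealGraph.verticesAbove (span {(k : ZMod m)}) := fun d =>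
    ⟨⟨span {(d : ZMod m)}, (span_natCast_eq_bot_iff (hdiv d d.2).2.1).not.mpr (hdiv d d.2).2.2.2,
      (span_natCast_eq_top_iff (hdiv d d.2).2.1).not.mpr (hdiv d d.2).2.2.1⟩,
      span_singleton_le_span_singleton.mpr (Nat.cast_dvd_cast (hdiv d d.2).1)⟩
  have hφ : Function.Bijective φ := by
    refine ⟨fun d e h => Subtype.ext ?_, fun ⟨⟨I, _, htop⟩, hI⟩ => ?_⟩
    · exact (span_natCast_inj (hdiv d d.2).2.1 (hdiv e e.2).2.1).mp (congrArg (·.1.1) h)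
    · obtain ⟨d, hd, rfl⟩ := exists_dvd_span_natCast_eq I
      refine ⟨⟨d, mem_erase.mpr ⟨(span_natCast_eq_top_iff hd).not.mp htop,
        Nat.mem_divisors.mpr ⟨(span_natCast_le_span_natCast_iff hd).mp hI, hk0⟩⟩⟩, rfl⟩
  rw [← Nat.card_congr (Equiv.ofBijective φ hφ), Nat.card_eq_finsetCard,
    card_erase_of_mem (Nat.one_mem_divisors.mpr hk0)]

end ZMod

/-- For a squarefree integer `m ≥ 2` with `s` distinct prime factors,
`ω(G(ℤ_m)) = χ(G(ℤ_m)) = 2^(s−1) − 1`. -/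
theorem idealGraph_squarefree_cliqueNum_chromaticNumber (m : ℕ) (hm : 2 ≤ m)
    (hsq : Squarefree m) :
    (idealGraph (ZMod m)).cliqueNum = 2 ^ (m.primeFactors.card - 1) - 1 ∧
      (idealGraph (ZMod m)).chromaticNumber =
        ((2 ^ (m.primeFactors.card - 1) - 1 : ℕ) : ℕ∞) := by
  have : NeZero m := ⟨hsq.ne_zero⟩
  obtain ⟨p, hp⟩ := Nat.nonempty_primeFactors.mpr (by omega : 1 < m)
  have hpp := Nat.prime_of_mem_primeFactors hp
  have hpm := Nat.dvd_of_mem_primeFactors hp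
  have hmp : m / p ≠ m := (Nat.div_lt_self (by omega) hpp.one_lt).ne
  obtain ⟨f, hf, hinf, hle⟩ := ZMod.exists_compl_span_div_prime hsq hpp hpm
  have hJ := (ZMod.span_natCast_eq_bot_iff (Nat.div_dvd_of_dvd hpm)).not.mpr hmp
  rw [← Nat.card_divisors_div_prime_of_squarefree hsq hpp hpm,
    ← ZMod.natCard_verticesAbove_span_natCast hsq.ne_zero (Nat.div_dvd_of_dvd hpm) hmp]
  exact idealGraph.cliqueNum_eq_and_chromaticNumber_eq hJ hf hinf hle
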